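/- The composition comparison of the algebraic path problem double functor is an identity of R-matrices: for any functions f : A → P and g : B → P and any R-matrices M on A and N on B, F( f_*(F(M)) ⊔ g_*(F(N)) ) = F( f_*(M) ⊔ g_*(N) ), where F(M) = ⨆_{n≥0} Mⁿ and ⊔ is pointwise join. -/
import Mathlib


open IsQuantale

section Defs

variable {R : Type*} [CompleteLattice R] [CommMonoid R]

/-- The matrix product of two `R`-matrices: `(M N)(i,k) = ⨆ j, M i j * N j k`. -/
def matMul {X : Type*} (M N : X → X → R) : X → X → R :=
  fun i k => ⨆ j, M i j * N j k

/-- The identity `R`-matrix `1_X`: `1` on the diagonal and `⊥` off the diagonal. -/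
def matId (X : Type*) : X → X → R :=
  fun i j => ⨆ _ : i = j, (1 : R)

/-- The `n`-fold matrix power, with `M⁰ = 1_X`. -/
def matPow {X : Type*} (M : X → X → R) : ℕ → X → X → R
  | 0 => matId X
  | n + 1 => matMul M (matPow M n)

/-- The solution of the algebraic path problem: `F(M) = ⨆ n, Mⁿ`. -/
def pathF {X : Type*} (M : X → X → R) : X → X → R :=
  fun i j => ⨆ n, matPow M n i j

/-- An `R`-category on `X` is an `R`-matrix `C` with `1_X ≤ C` and `C·C ≤ C`. -/
def IsRCat {X : Type*} (C : X → X → R) : Prop :=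
  matId X ≤ C ∧ matMul C C ≤ C

/-- The pushforward of an `R`-matrix along a function. -/
def pushforward {X Y : Type*} (f : X → Y) (M : X → X → R) : Y → Y → R :=
  fun y y' => ⨆ p : {q : X × X // f q.1 = y ∧ f q.2 = y'}, M p.1.1 p.1.2

/-- The block sum `M ⊕ N` of two `R`-matrices on the disjoint union. -/
def blockSum {X Y : Type*} (M : X → X → R) (N : Y → Y → R) : (X ⊕ Y) → (X ⊕ Y) → R
  | Sum.inl x, Sum.inl x' => M x x'
  | Sum.inr y, Sum.inr y' => N y y'
  | _, _ => ⊥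

/-- A vertex `v` is a source of `M` if `M c v = ⊥` for all `c`. -/
def IsSource {X : Type*} (M : X → X → R) (v : X) : Prop := ∀ c, M c v = ⊥

/-- A vertex `v` is a sink of `M` if `M v c = ⊥` for all `c`. -/
def IsSink {X : Type*} (M : X → X → R) (v : X) : Prop := ∀ c, M v c = ⊥

end Defs

/-- The relation generating the pushout of sets of `f : Z → X` and `g : Z → Y`. -/
def pushoutRel {Z X Y : Type*} (f : Z → X) (g : Z → Y) : (X ⊕ Y) → (X ⊕ Y) → Prop :=
  fun p q => ∃ z, p = Sum.inl (f z) ∧ q = Sum.inr (g z)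

/-- The pushout of sets `X +_Z Y`: the quotient of the disjoint union `X ⊕ Y`
by the equivalence relation generated by `f z ∼ g z`. -/
def SetPushout {Z X Y : Type*} (f : Z → X) (g : Z → Y) : Type _ :=
  Quot (pushoutRel f g)

/-- The first injection `X → X +_Z Y` into the pushout of sets. -/
def poInl {Z X Y : Type*} (f : Z → X) (g : Z → Y) : X → SetPushout f g :=
  fun x => Quot.mk _ (Sum.inl x)

/-- The second injection `Y → X +_Z Y` into the pushout of sets. -/
def poInr {Z X Y : Type*} (f : Z → X) (g : Z → Y) : Y → SetPushout f g :=
  fun y => Quot.mk _ (Sum.inr y)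

section Aux
open IsQuantale
variable {R : Type*} [CompleteLattice R] [CommMonoid R] [IsQuantale R]

lemma mul_iSup' {ι : Sort*} (x : R) (f : ι → R) : x * ⨆ i, f i = ⨆ i, x * f i := by
  rw [iSup, mul_sSup_distrib, iSup_range]

lemma iSup_mul' {ι : Sort*} (x : R) (f : ι → R) : (⨆ i, f i) * x = ⨆ i, f i * x := by
  rw [iSup, sSup_mul_distrib, iSup_range]

lemma matMul_mono {X : Type*} {M M' N N' : X → X → R} (hM : M ≤ M') (hN : N ≤ N') :
    matMul M N ≤ matMul M' N' := by
  intro i k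
  exact iSup_mono fun j => mul_le_mul' (hM i j) (hN j k)

lemma matMul_id_left {X : Type*} (M : X → X → R) : matMul (matId X) M = M := by
  funext i k
  unfold matMul matId
  simp only [iSup_mul', one_mul]
  simp

lemma matMul_id_right {X : Type*} (M : X → X → R) : matMul M (matId X) = M := by
  funext i k
  unfold matMul matId
  simp only [mul_iSup', mul_one]
  simp

lemma matMul_assoc {X : Type*} (M N P : X → X → R) :
    matMul (matMul M N) P = matMul M (matMul N P) := by
  funext i l
  unfold matMul
  simp only [mul_iSup', iSup_mul', mul_assoc]
  exact iSup_comm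

lemma matPow_mono {X : Type*} {M N : X → X → R} (h : M ≤ N) (n : ℕ) :
    matPow M n ≤ matPow N n := by
  induction n with
  | zero => exact le_rfl
  | succ n ih => exact matMul_mono h ih

lemma matPow_le_pathF {X : Type*} (M : X → X → R) (n : ℕ) : matPow M n ≤ pathF M :=
  fun i j => le_iSup (fun n => matPow M n i j) n

lemma matPow_one {X : Type*} (M : X → X → R) : matPow M 1 = M := matMul_id_right M

lemma le_pathF {X : Type*} (M : X → X → R) : M ≤ pathF M :=
  le_trans (le_of_eq (matPow_one M).symm) (matPow_le_pathF M 1)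

lemma pathF_mono {X : Type*} {M N : X → X → R} (h : M ≤ N) : pathF M ≤ pathF N :=
  fun i j => iSup_mono fun n => matPow_mono h n i j

lemma matMul_pow_le {X : Type*} (M : X → X → R) (n m : ℕ) :
    matMul (matPow M n) (matPow M m) ≤ matPow M (n + m) := by
  induction n with
  | zero =>
    rw [show matPow M 0 = matId X from rfl, matMul_id_left, Nat.zero_add]
  | succ n ih =>
    rw [show matPow M (n+1) = matMul M (matPow M n) from rfl, matMul_assoc,
      show n + 1 + m = (n + m) + 1 by omega]
    exact matMul_mono le_rfl ih

lemma pathF_isRCat {X : Type*} (M : X → X → R) : IsRCat (pathF M) := by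
  constructor
  · exact matPow_le_pathF M 0
  · intro i k
    refine iSup_le fun j => ?_
    show pathF M i j * pathF M j k ≤ pathF M i k
    unfold pathF
    rw [iSup_mul']
    refine iSup_le fun n => ?_
    rw [mul_iSup']
    refine iSup_le fun m => ?_
    refine le_trans (le_iSup (fun j => matPow M n i j * matPow M m j k) j) ?_
    exact le_trans (matMul_pow_le M n m i k) (le_iSup (fun n => matPow M n i k) (n + m))

lemma pathF_le_of_isRCat {X : Type*} {K C : X → X → R} (hC : IsRCat C) (h : K ≤ C) :
    pathF K ≤ C := by
  intro i j
  refine iSup_le fun n => ?_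
  induction n generalizing i j with
  | zero => exact hC.1 i j
  | succ n ih =>
    refine le_trans ?_ (hC.2 i j)
    exact iSup_mono fun k => mul_le_mul' (h i k) (ih k j)

lemma pushforward_mono {X Y : Type*} (f : X → Y) {M N : X → X → R} (h : M ≤ N) :
    pushforward f M ≤ pushforward f N :=
  fun y y' => iSup_mono fun p => h p.1.1 p.1.2

lemma pushforward_matMul_le {X Y : Type*} (f : X → Y) (M N : X → X → R) :
    pushforward f (matMul M N) ≤ matMul (pushforward f M) (pushforward f N) := by
  intro y y'
  refine iSup_le fun p => ?_
  obtain ⟨⟨x, x'⟩, hx, hx'⟩ := p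
  refine iSup_le fun j => ?_
  refine le_trans ?_ (le_iSup (fun p => pushforward f M y p * pushforward f N p y') (f j))
  exact mul_le_mul'
    (le_iSup (fun p : {q : X × X // f q.1 = y ∧ f q.2 = f j} => M p.1.1 p.1.2)
      ⟨(x, j), hx, rfl⟩)
    (le_iSup (fun p : {q : X × X // f q.1 = f j ∧ f q.2 = y'} => N p.1.1 p.1.2)
      ⟨(j, x'), rfl, hx'⟩)

lemma pushforward_matId_le {X Y : Type*} (f : X → Y) :
    pushforward f (matId X : X → X → R) ≤ matId Y := by
  intro y y'
  refine iSup_le fun p => ?_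
  obtain ⟨⟨x, x'⟩, hx, hx'⟩ := p
  refine iSup_le fun hxx => ?_
  dsimp at hxx hx hx'
  subst hxx; subst hx; subst hx'
  exact le_iSup (fun _ : f x = f x => (1 : R)) rfl

lemma pushforward_matPow_le {X Y : Type*} (f : X → Y) (M : X → X → R) (n : ℕ) :
    pushforward f (matPow M n) ≤ matPow (pushforward f M) n := by
  induction n with
  | zero => exact pushforward_matId_le f
  | succ n ih => exact le_trans (pushforward_matMul_le f _ _) (matMul_mono le_rfl ih)

lemma pushforward_pathF_le {X Y : Type*} (f : X → Y) (M : X → X → R) :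
    pushforward f (pathF M) ≤ pathF (pushforward f M) := by
  intro y y'
  refine iSup_le fun p => ?_
  obtain ⟨⟨x, x'⟩, hx, hx'⟩ := p
  refine iSup_le fun n => ?_
  refine le_trans ?_ (matPow_le_pathF (pushforward f M) n y y')
  refine le_trans ?_ (pushforward_matPow_le f M n y y')
  exact le_iSup (fun p : {q : X × X // f q.1 = y ∧ f q.2 = y'} => matPow M n p.1.1 p.1.2)
    ⟨(x, x'), hx, hx'⟩

end Aux

/-- The composition comparison of the algebraic path problem double functor
is an identity of `R`-matrices:
`F(f_*(F(M)) ⊔ g_*(F(N))) = F(f_*(M) ⊔ g_*(N))`. -/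
theorem pathF_composition_comparison {R : Type*} [CompleteLattice R] [CommMonoid R]
    [IsQuantale R] {A B P : Type*} (f : A → P) (g : B → P)
    (M : A → A → R) (N : B → B → R) :
    pathF (pushforward f (pathF M) ⊔ pushforward g (pathF N)) =
      pathF (pushforward f M ⊔ pushforward g N) := by
  apply le_antisymm
  · refine pathF_le_of_isRCat (pathF_isRCat _) (sup_le ?_ ?_)
    · exact le_trans (pushforward_pathF_le f M) (pathF_mono le_sup_left)
    · exact le_trans (pushforward_pathF_le g N) (pathF_mono le_sup_right)
  · refine pathF_mono (sup_le ?_ ?_)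
    · exact le_trans (pushforward_mono f (le_pathF M)) le_sup_left
    · exact le_trans (pushforward_mono g (le_pathF N)) le_sup_right
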